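/- arXiv:2101.00692 — 6 statements merged into one kernel-verified Lean document; each statement's English description precedes it below -/
import Mathlib

section
/- Consider the abstraction of the clear-block problem: states are pairs (H, n) with H a boolean (holding a block) and n ∈ ℕ (blocks above x), with transitions: from (false, n) with n>0 to (true, n−1) [pick topmost block above x], and from (true, n) to (false, n) or to (false, n+1) [put down block elsewhere or on top of the pile]; goal states are (false, 0). The policy that allows transitions (false,n)→(true,n−1) for n>0 and (true,n)→(false,n) for n>0, and from (true,0) to (false,0), solves the problem: every maximal policy-compatible trajectory from any state reaches the goal. -/
/-- Goal of the clear-block abstraction: gripper empty and no blocks above x. -/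
def ClearGoal (s : Bool × ℕ) : Prop := s = (false, 0)

/-- Policy-compatible transitions of the clear-block abstraction. -/
def ClearCompat (s t : Bool × ℕ) : Prop :=
  (∃ n : ℕ, 1 ≤ n ∧ s = (false, n) ∧ t = (true, n - 1)) ∨
  (∃ n : ℕ, 1 ≤ n ∧ s = (true, n) ∧ t = (false, n)) ∨
  (s = (true, 0) ∧ t = (false, 0))

def clearMu (s : Bool × ℕ) : ℕ := 2 * s.2 + (if s.1 then 1 else 0)

lemma clearMu_lt {s t : Bool × ℕ} (h : ClearCompat s t) : clearMu t < clearMu s := by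
  rcases h with ⟨n, hn, hs, ht⟩ | ⟨n, hn, hs, ht⟩ | ⟨hs, ht⟩ <;>
    subst hs <;> subst ht <;> simp [clearMu] <;> omega

/-- The policy for the clear-block abstraction solves the problem:
every maximal policy-compatible trajectory from any state reaches the goal. -/
theorem stmt6 :
    (∀ (n : ℕ) (f : ℕ → Bool × ℕ),
      (∀ i, i < n → ClearCompat (f i) (f (i+1))) →
      (¬ ∃ t, ClearCompat (f n) t) → ClearGoal (f n)) ∧
    (¬ ∃ f : ℕ → Bool × ℕ, ∀ i, ClearCompat (f i) (f (i+1))) := by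
  constructor
  · intro n f _ hstuck
    unfold ClearGoal
    match h : f n with
    | (false, 0) => rfl
    | (false, m + 1) => exact absurd ⟨(true, m), Or.inl ⟨m + 1, by omega, h, rfl⟩⟩ hstuck
    | (true, 0) => exact absurd ⟨(false, 0), Or.inr (Or.inr ⟨h, rfl⟩)⟩ hstuck
    | (true, m + 1) => exact absurd ⟨(false, m + 1), Or.inr (Or.inl ⟨m + 1, by omega, h, rfl⟩)⟩ hstuck
  · rintro ⟨f, hf⟩
    have key : ∀ i, clearMu (f i) + i ≤ clearMu (f 0) := by
      intro i
      induction i with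
      | zero => omega
      | succ k ih => have := clearMu_lt (hf k); omega
    have := key (clearMu (f 0) + 1)
    omega
end

section
/- Completeness direction of the Max-SAT encoding: from any satisfying assignment σ of the theory T(S,F) (clauses 1–6 as described), the policy π defined over the selected features Φ = {f : σ ⊨ Select(f)}, whose compatible transitions are exactly those in the same feature-change class as some Good transition, solves every problem P_i[s] for non-dead-end reachable s: the subgraph of Good transitions is acyclic and every non-goal non-dead-end state reaches a goal along Good transitions. -/
/-- Boolean valuation of a (numerical or boolean) feature: whether its value is nonzero. -/
def bvalF {S F : Type} (feat : F → S → ℕ) (f : F) (s : S) : Bool := decide (0 < feat f s)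

/-- Change direction Δ_f(s,s') of feature f across transition (s,s'). -/
def deltaF {S F : Type} (feat : F → S → ℕ) (f : F) (s s' : S) : Ordering :=
  compare (feat f s) (feat f s')

/-- A state is solvable if some transition path reaches a goal. -/
def Solvable {S : Type} (trans : S → S → Prop) (goal : S → Prop) (s : S) : Prop :=
  ∃ g, goal g ∧ Relation.ReflTransGen trans s g

/-- There is a path of length n from s to a goal. -/
def Reaches {S : Type} (trans : S → S → Prop) (goal : S → Prop) (s : S) (n : ℕ) : Prop :=
  ∃ p : ℕ → S, p 0 = s ∧ (∀ i, i < n → trans (p i) (p (i+1))) ∧ goal (p n)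

/-- V*(s): shortest distance from s to a goal. -/
noncomputable def VstarOf {S : Type} (trans : S → S → Prop) (goal : S → Prop) (s : S) : ℕ :=
  sInf {n | Reaches trans goal s n}

/-- completeness of the Max-SAT encoding: from a satisfying
assignment (Select, Good, V) of the clauses (1)-(6), the induced policy -- whose
compatible transitions are exactly those in the same feature-change class as some
Good transition -- solves every P_i[s] for non-dead-end s: the Good subgraph is
acyclic and every non-goal, non-dead-end state reaches a goal along Good edges. -/
theorem stmt10 {S F : Type} [Fintype S] [Fintype F]
    (trans : S → S → Prop) (goal dead : S → Prop)
    (hdead : ∀ s, dead s ↔ ¬ Solvable trans goal s)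
    (feat : F → S → ℕ)
    (Select : F → Prop) (Good : S → S → Prop) (V : S → ℕ) (δ : ℝ) (hδ : 1 ≤ δ)
    (c1 : ∀ s, ¬ goal s → ¬ dead s → ∃ s', trans s s' ∧ Good s s')
    (c2 : ∀ s, ¬ dead s →
      VstarOf trans goal s ≤ V s ∧ (V s : ℝ) ≤ δ * VstarOf trans goal s)
    (c3 : ∀ s s', trans s s' → ¬ goal s → ¬ dead s → ¬ dead s' →
      Good s s' → V s' < V s)
    (c4 : ∀ s s', trans s s' → ¬ (goal s ↔ goal s') →
      ∃ f, Select f ∧ bvalF feat f s ≠ bvalF feat f s')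
    (c5 : ∀ s s', trans s s' → ¬ dead s → dead s' → ¬ Good s s')
    (c6 : ∀ s s' t t', trans s s' → trans t t' →
      ¬ goal s → ¬ dead s → ¬ goal t → ¬ dead t →
      Good s s' → ¬ Good t t' →
      ∃ f, Select f ∧ deltaF feat f s s' ≠ deltaF feat f t t') :
    -- the Good-subgraph (edges from non-goal, non-dead-end states) is acyclic,
    (∀ s, ¬ Relation.TransGen
      (fun a b => trans a b ∧ Good a b ∧ ¬ goal a ∧ ¬ dead a) s s) ∧
    -- every non-goal, non-dead-end state reaches a goal along Good edges,
    (∀ s, ¬ goal s → ¬ dead s → ∃ g, goal g ∧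
      Relation.ReflTransGen
        (fun a b => trans a b ∧ Good a b ∧ ¬ goal a ∧ ¬ dead a) s g) ∧
    -- and the induced policy's compatible transitions coincide with Good:
    (∀ t t', trans t t' → ¬ goal t → ¬ dead t → ¬ dead t' →
      ((∃ s s', trans s s' ∧ ¬ goal s ∧ ¬ dead s ∧ ¬ dead s' ∧ Good s s' ∧
          (∀ f, Select f → bvalF feat f s = bvalF feat f t) ∧
          (∀ f, Select f → deltaF feat f s s' = deltaF feat f t t')) ↔
        Good t t')) := by

  have hnd : ∀ a b, trans a b → Good a b → ¬ dead a → ¬ dead b := by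
    intro a b ht hg hda hdb
    exact c5 a b ht hda hdb hg
  have hdec : ∀ a b, (trans a b ∧ Good a b ∧ ¬ goal a ∧ ¬ dead a) → V b < V a := by
    rintro a b ⟨ht, hg, hga, hda⟩
    exact c3 a b ht hga hda (hnd a b ht hg hda) hg
  refine ⟨?_, ?_, ?_⟩
  · intro s hcyc
    have h : ∀ a b, Relation.TransGen
        (fun a b => trans a b ∧ Good a b ∧ ¬ goal a ∧ ¬ dead a) a b → V b < V a := by
      intro a b h
      induction h with
      | single h => exact hdec _ _ h
      | tail _ h ih => exact lt_trans (hdec _ _ h) ih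
    exact lt_irrefl _ (h s s hcyc)
  · have key : ∀ n s, V s ≤ n → ¬ goal s → ¬ dead s → ∃ g, goal g ∧
        Relation.ReflTransGen
          (fun a b => trans a b ∧ Good a b ∧ ¬ goal a ∧ ¬ dead a) s g := by
      intro n
      induction n with
      | zero =>
        intro s hn hg hd
        obtain ⟨s', ht, hG⟩ := c1 s hg hd
        have hd' := hnd s s' ht hG hd
        by_cases hg' : goal s'
        · exact ⟨s', hg', Relation.ReflTransGen.single ⟨ht, hG, hg, hd⟩⟩
        · have := c3 s s' ht hg hd hd' hG
          omega
      | succ n ih =>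
        intro s hn hg hd
        obtain ⟨s', ht, hG⟩ := c1 s hg hd
        have hd' := hnd s s' ht hG hd
        by_cases hg' : goal s'
        · exact ⟨s', hg', Relation.ReflTransGen.single ⟨ht, hG, hg, hd⟩⟩
        · have hv := c3 s s' ht hg hd hd' hG
          obtain ⟨g, hgg, hp⟩ := ih s' (by omega) hg' hd'
          exact ⟨g, hgg, Relation.ReflTransGen.head ⟨ht, hG, hg, hd⟩ hp⟩
    intro s hg hd
    exact key (V s) s le_rfl hg hd
  · intro t t' ht hgt hdt hdt'
    constructor
    · rintro ⟨s, s', hts, hgs, hds, hds', hG, hb, hΔ⟩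
      by_contra hGn
      obtain ⟨f, hf, hne⟩ := c6 s s' t t' hts ht hgs hds hgt hdt hG hGn
      exact hne (hΔ f hf)
    · intro hG
      exact ⟨t, t', ht, hgt, hdt, hdt', hG, fun f _ => rfl, fun f _ => rfl⟩
end

section
/- Consider the abstraction of picking rewards: states (r, d) ∈ ℕ × ℕ with d ≤ D, goal r = 0, and policy-compatible transitions of two kinds: (r,d) → (r−1, d') with d=0, d' > 0 or r−1=0 [pick reward], and (r,d) → (r, d−1) with d > 0 [move closer]. Every maximal policy-compatible trajectory from a state with r > 0 and finite d reaches a goal state in at most r·(D+1) steps. -/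
/-- Policy-compatible transitions of the rewards abstraction over states (r, d):
pick a reward when d = 0 (afterwards the distance to the next reward is positive
unless no reward is left), or move closer to the closest reward when d > 0. -/
def RCompat (D : ℕ) (s t : ℕ × ℕ) : Prop :=
  (s.2 = 0 ∧ 0 < s.1 ∧ t.1 = s.1 - 1 ∧ t.2 ≤ D ∧ (0 < t.2 ∨ t.1 = 0)) ∨
  (0 < s.2 ∧ 0 < s.1 ∧ t.1 = s.1 ∧ t.2 = s.2 - 1)

/-- Potential function: 0 at goal states, otherwise (r-1)*(D+1)+d+1. -/
def rphi (D : ℕ) (s : ℕ × ℕ) : ℕ :=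
  match s.1 with
  | 0 => 0
  | r + 1 => r * (D + 1) + s.2 + 1

lemma rphi_decr (D : ℕ) (s t : ℕ × ℕ) (h : RCompat D s t) :
    rphi D t < rphi D s := by
  rcases h with ⟨hd, hr, ht1, ht2, _⟩ | ⟨hd, hr, ht1, ht2⟩
  · obtain ⟨r, hrval⟩ : ∃ r, s.1 = r + 1 := ⟨s.1 - 1, by omega⟩
    have h1 : t.1 = r := by omega
    rcases Nat.eq_zero_or_pos r with h0 | hp
    · simp [rphi, hrval, h1, h0]
    · obtain ⟨r', hr'⟩ : ∃ r', r = r' + 1 := ⟨r - 1, by omega⟩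
      have : rphi D t = r' * (D + 1) + t.2 + 1 := by simp [rphi, h1, hr']
      rw [this]
      have : rphi D s = (r' + 1) * (D + 1) + s.2 + 1 := by
        simp [rphi, hrval, hr']
      rw [this]
      have : (r' + 1) * (D + 1) = r' * (D + 1) + (D + 1) := by ring
      omega
  · obtain ⟨r, hrval⟩ : ∃ r, s.1 = r + 1 := ⟨s.1 - 1, by omega⟩
    have h1 : t.1 = r + 1 := by omega
    simp only [rphi, hrval, h1]
    omega

lemma rphi_chain (D : ℕ) (f : ℕ → ℕ × ℕ) (n : ℕ)
    (h : ∀ i, i < n → RCompat D (f i) (f (i+1))) :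
    rphi D (f n) + n ≤ rphi D (f 0) := by
  induction n with
  | zero => simp
  | succ k ih =>
    have h1 := rphi_decr D (f k) (f (k+1)) (h k (by omega))
    have h2 := ih (fun i hi => h i (by omega))
    omega

/-- every maximal policy-compatible trajectory from a state with
r > 0 and d ≤ D reaches a goal state (r = 0) in at most r·(D+1) steps. -/
theorem stmt13 (D : ℕ) (hD : 1 ≤ D) :
    (∀ (n : ℕ) (f : ℕ → ℕ × ℕ),
      0 < (f 0).1 → (f 0).2 ≤ D →
      (∀ i, i < n → RCompat D (f i) (f (i+1))) →
      (¬ ∃ t, RCompat D (f n) t) →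
      (f n).1 = 0 ∧ n ≤ (f 0).1 * (D + 1)) ∧
    (¬ ∃ f : ℕ → ℕ × ℕ, (f 0).2 ≤ D ∧ ∀ i, RCompat D (f i) (f (i+1))) := by
  constructor
  · intro n f hr0 hd0 hsteps hmax
    have hend : (f n).1 = 0 := by
      by_contra h
      have hpos : 0 < (f n).1 := Nat.pos_of_ne_zero h
      apply hmax
      rcases Nat.eq_zero_or_pos (f n).2 with h0 | hp
      · exact ⟨((f n).1 - 1, 1), Or.inl ⟨h0, hpos, rfl, hD, Or.inl one_pos⟩⟩
      · exact ⟨((f n).1, (f n).2 - 1), Or.inr ⟨hp, hpos, rfl, rfl⟩⟩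
    refine ⟨hend, ?_⟩
    have hchain := rphi_chain D f n hsteps
    obtain ⟨r, hrval⟩ : ∃ r, (f 0).1 = r + 1 := ⟨(f 0).1 - 1, by omega⟩
    have h0 : rphi D (f 0) = r * (D + 1) + (f 0).2 + 1 := by
      simp [rphi, hrval]
    have h1 : (f 0).1 * (D + 1) = r * (D + 1) + (D + 1) := by
      rw [hrval]; ring
    omega
  · rintro ⟨f, _, hsteps⟩
    have hchain := rphi_chain D f (rphi D (f 0) + 1) (fun i _ => hsteps i)
    omega
end

section
/- In atomic-move Blocksworld, moving a block can never change any other block from well-placed to not well-placed, and a block b becomes well-placed by a move iff b is moved onto its target location and that target is well-placed (or its target is the table). -/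
/-- "x is directly on y" in a Blocksworld state (none = table). -/
def OnRel {n : ℕ} (s : Fin n → Option (Fin n)) (x y : Fin n) : Prop := s x = some y

/-- A state is a forest rooted at the table: no cycles in the on-relation. -/
def AcyclicBW {n : ℕ} (s : Fin n → Option (Fin n)) : Prop :=
  ∀ b, ¬ Relation.TransGen (OnRel s) b b

/-- A block is clear if nothing is on it. -/
def ClearB {n : ℕ} (s : Fin n → Option (Fin n)) (b : Fin n) : Prop := ∀ c, s c ≠ some b

/-- A block is well-placed if it, and every block transitively below it, is on its
target location. -/
def WellPlaced {n : ℕ} (s g : Fin n → Option (Fin n)) (b : Fin n) : Prop :=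
  ∀ c, Relation.ReflTransGen (OnRel s) b c → s c = g c

/-- A new-state path starting away from b stays away from b and is an old path. -/
lemma path_avoid {n : ℕ} (s : Fin n → Option (Fin n)) (b : Fin n)
    (l : Option (Fin n)) (hb : ClearB s b) {a c : Fin n} (ha : a ≠ b)
    (h : Relation.ReflTransGen (OnRel (Function.update s b l)) a c) :
    c ≠ b ∧ Relation.ReflTransGen (OnRel s) a c := by
  induction h with
  | refl => exact ⟨ha, Relation.ReflTransGen.refl⟩
  | tail _ e ih =>
    rcases ih with ⟨hmb, hp⟩
    rw [OnRel, Function.update_of_ne hmb] at e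
    exact ⟨fun hcb => hb _ (hcb ▸ e), hp.tail e⟩

/-- An old-state path starting away from b stays away from b and is a new path. -/
lemma path_avoid' {n : ℕ} (s : Fin n → Option (Fin n)) (b : Fin n)
    (l : Option (Fin n)) (hb : ClearB s b) {a c : Fin n} (ha : a ≠ b)
    (h : Relation.ReflTransGen (OnRel s) a c) :
    c ≠ b ∧ Relation.ReflTransGen (OnRel (Function.update s b l)) a c := by
  induction h with
  | refl => exact ⟨ha, Relation.ReflTransGen.refl⟩
  | tail _ e ih =>
    rcases ih with ⟨hmb, hp⟩
    refine ⟨fun hcb => hb _ (hcb ▸ e), hp.tail ?_⟩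
    simpa [OnRel, Function.update_of_ne hmb] using e

/-- a legal move of a clear block b to a legal destination l never
turns any other well-placed block into a misplaced one, and b is well-placed after
the move iff l is b's target location and (l is the table, or the destination
block is well-placed). -/
theorem stmt16 (n : ℕ) (s g : Fin n → Option (Fin n)) (hs : AcyclicBW s)
    (b : Fin n) (l : Option (Fin n))
    (hb : ClearB s b)
    (hl : ∀ c, l = some c → ClearB s c ∧ c ≠ b) :
    (∀ a, a ≠ b → WellPlaced s g a → WellPlaced (Function.update s b l) g a) ∧
    (WellPlaced (Function.update s b l) g b ↔
      (l = g b ∧ (l = none ∨ ∃ c, l = some c ∧ WellPlaced s g c))) := by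
  constructor
  · intro a hab hwp c hc
    obtain ⟨hcb, hp⟩ := path_avoid s b l hb hab hc
    rw [Function.update_of_ne hcb]
    exact hwp c hp
  · constructor
    · intro hwp
      have hbb : Function.update s b l b = g b := hwp b Relation.ReflTransGen.refl
      rw [Function.update_self] at hbb
      refine ⟨hbb, ?_⟩
      cases hlv : l with
      | none => exact Or.inl rfl
      | some c =>
        refine Or.inr ⟨c, rfl, ?_⟩
        obtain ⟨_, hcb⟩ := hl c hlv
        intro d hd
        obtain ⟨hdb, hp⟩ := path_avoid' s b l hb hcb hd
        have : Relation.ReflTransGen (OnRel (Function.update s b l)) b d := by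
          refine Relation.ReflTransGen.head ?_ hp
          simp [OnRel, hlv]
        have := hwp d this
        rwa [Function.update_of_ne hdb] at this
    · rintro ⟨hgb, hcase⟩
      intro c hc
      rcases Relation.ReflTransGen.cases_head hc with rfl | ⟨d, e, hp⟩
      · rw [Function.update_self]; exact hgb
      · have e' : l = some d := by simpa [OnRel] using e
        obtain ⟨_, hdb⟩ := hl d e'
        obtain ⟨hcb, hp'⟩ := path_avoid s b l hb hdb hp
        rw [Function.update_of_ne hcb]
        rcases hcase with hnone | ⟨c', hc', hwc⟩
        · simp [hnone] at e'
        · rw [hc'] at e'; injection e' with he; subst he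
          exact hwc c hp'
end

section
/- Every finite set of deterministic policy rules can be simulated by a non-deterministic policy, but not conversely: there exists a finite state space, a feature set Φ, and a non-deterministic policy over Φ that solves it, such that no deterministic policy over Φ (one where the bodies of distinct rules are pairwise jointly inconsistent and each rule has a single effect set) is compatible with exactly a set of transitions that solves the state space. -/
/-- A rule body C (partial boolean valuation) holds in state s. -/
def condHolds {S F : Type} (feat : F → S → ℕ) (C : F → Option Bool) (s : S) : Prop :=
  ∀ f b, C f = some b → bvalF feat f s = b

/-- A rule body C holds in an abstract boolean valuation v. -/
def holdsV {F : Type} (C : F → Option Bool) (v : F → Bool) : Prop :=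
  ∀ f b, C f = some b → v f = b

/-- Transition (s,s') satisfies effect E relative to the features in Φ. -/
def satEff {S F : Type} (Φ : Set F) (feat : F → S → ℕ) (E : F → Ordering) (s s' : S) : Prop :=
  ∀ f ∈ Φ, deltaF feat f s s' = E f

/-- Transition (s,s') is compatible with policy π over features Φ. -/
def PolCompat {S F : Type} (Φ : Set F) (feat : F → S → ℕ)
    (π : Set ((F → Option Bool) × Set (F → Ordering))) (s s' : S) : Prop :=
  ∃ r ∈ π, condHolds feat r.1 s ∧ ∃ E ∈ r.2, satEff Φ feat E s s'

/-- The policy only mentions features of Φ in its rule bodies. -/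
def OverPhi {F : Type} (Φ : Set F)
    (π : Set ((F → Option Bool) × Set (F → Ordering))) : Prop :=
  ∀ r ∈ π, ∀ f, r.1 f ≠ none → f ∈ Φ

/-- Deterministic policy: each rule has a single effect set, and the bodies of
distinct rules are pairwise jointly inconsistent. -/
def DetPolicy {F : Type} (π : Set ((F → Option Bool) × Set (F → Ordering))) : Prop :=
  (∀ r ∈ π, ∃ E, r.2 = {E}) ∧
  (∀ r ∈ π, ∀ r' ∈ π, r ≠ r' → ∀ v : F → Bool, ¬ (holdsV r.1 v ∧ holdsV r'.1 v))

/-- The policy (given by its compatible transitions) solves the instance with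
initial state s: every maximal compatible trajectory from s reaches a goal. -/
def SolvesFrom {S : Type} (trans : S → S → Prop) (goal : S → Prop)
    (compat : S → S → Prop) (s : S) : Prop :=
  (∀ (n : ℕ) (p : ℕ → S), p 0 = s →
      (∀ i, i < n → trans (p i) (p (i+1)) ∧ compat (p i) (p (i+1))) →
      (¬ ∃ t, trans (p n) t ∧ compat (p n) t) →
      ∃ i ≤ n, goal (p i)) ∧
  (¬ ∃ p : ℕ → S, p 0 = s ∧ ∀ i, trans (p i) (p (i+1)) ∧ compat (p i) (p (i+1)))

-- ==== auxiliary construction ====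

def featX : Unit → Fin 5 → ℕ := fun _ s => ![3,2,2,1,3] s
def transX : Fin 5 → Fin 5 → Prop := fun s t =>
  (s = 0 ∧ (t = 1 ∨ t = 2)) ∨ (s = 1 ∧ t = 3) ∨ (s = 2 ∧ t = 4)
def goalX : Fin 5 → Prop := fun s => s = 3 ∨ s = 4
def ruleX : (Unit → Option Bool) × Set (Unit → Ordering) :=
  (fun _ => some true, {fun _ => Ordering.gt, fun _ => Ordering.lt})
def piX : Set ((Unit → Option Bool) × Set (Unit → Ordering)) := {ruleX}

lemma condX (s : Fin 5) : condHolds featX ruleX.1 s := by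
  intro f b h; cases f; cases h; revert s; decide

lemma compat_gt {s t : Fin 5} (h : deltaF featX () s t = Ordering.gt) :
    PolCompat Set.univ featX piX s t :=
  ⟨ruleX, rfl, condX s, fun _ => Ordering.gt, Or.inl rfl, fun f _ => by cases f; exact h⟩

lemma compat_lt {s t : Fin 5} (h : deltaF featX () s t = Ordering.lt) :
    PolCompat Set.univ featX piX s t :=
  ⟨ruleX, rfl, condX s, fun _ => Ordering.lt, Or.inr rfl, fun f _ => by cases f; exact h⟩

lemma compatX : ∀ s t : Fin 5, transX s t → PolCompat Set.univ featX piX s t := by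
  rintro s t (⟨hs, ht | ht⟩ | ⟨hs, ht⟩ | ⟨hs, ht⟩) <;> subst hs <;> subst ht
  · exact compat_gt (by decide)
  · exact compat_gt (by decide)
  · exact compat_gt (by decide)
  · exact compat_lt (by decide)

lemma solvesX : SolvesFrom transX goalX (PolCompat Set.univ featX piX) 0 := by
  constructor
  · intro n p hp0 hstep hmax
    match n with
    | 0 =>
      exact absurd ⟨1, by rw [hp0]; exact ⟨Or.inl ⟨rfl, Or.inl rfl⟩, compatX 0 1 (Or.inl ⟨rfl, Or.inl rfl⟩)⟩⟩ hmax
    | 1 =>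
      have h0 := (hstep 0 (by omega)).1
      rw [hp0] at h0
      rcases h0 with ⟨_, h1 | h1⟩ | ⟨h, _⟩ | ⟨h, _⟩
      · exact absurd ⟨3, by rw [h1]; exact ⟨Or.inr (Or.inl ⟨rfl, rfl⟩), compatX 1 3 (Or.inr (Or.inl ⟨rfl, rfl⟩))⟩⟩ hmax
      · exact absurd ⟨4, by rw [h1]; exact ⟨Or.inr (Or.inr ⟨rfl, rfl⟩), compatX 2 4 (Or.inr (Or.inr ⟨rfl, rfl⟩))⟩⟩ hmax
      · exact absurd h (by decide)
      · exact absurd h (by decide)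
    | (m + 2) =>
      have h0 := (hstep 0 (by omega)).1
      rw [hp0] at h0
      have h1 := (hstep 1 (by omega)).1
      rcases h0 with ⟨_, hh | hh⟩ | ⟨h, _⟩ | ⟨h, _⟩
      · rw [hh] at h1
        rcases h1 with ⟨h, _⟩ | ⟨_, h2⟩ | ⟨h, _⟩
        · exact absurd h (by decide)
        · exact ⟨2, by omega, Or.inl h2⟩
        · exact absurd h (by decide)
      · rw [hh] at h1
        rcases h1 with ⟨h, _⟩ | ⟨h, _⟩ | ⟨_, h2⟩
        · exact absurd h (by decide)
        · exact absurd h (by decide)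
        · exact ⟨2, by omega, Or.inr h2⟩
      · exact absurd h (by decide)
      · exact absurd h (by decide)
  · rintro ⟨p, hp0, hstep⟩
    have h0 := (hstep 0).1
    rw [hp0] at h0
    have h1 := (hstep 1).1
    have h2 := (hstep 2).1
    rcases h0 with ⟨_, hh | hh⟩ | ⟨h, _⟩ | ⟨h, _⟩
    · rw [hh] at h1
      rcases h1 with ⟨h, _⟩ | ⟨_, hh2⟩ | ⟨h, _⟩
      · exact absurd h (by decide)
      · rw [hh2] at h2
        rcases h2 with ⟨h, _⟩ | ⟨h, _⟩ | ⟨h, _⟩ <;> exact absurd h (by decide)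
      · exact absurd h (by decide)
    · rw [hh] at h1
      rcases h1 with ⟨h, _⟩ | ⟨h, _⟩ | ⟨_, hh2⟩
      · exact absurd h (by decide)
      · exact absurd h (by decide)
      · rw [hh2] at h2
        rcases h2 with ⟨h, _⟩ | ⟨h, _⟩ | ⟨h, _⟩ <;> exact absurd h (by decide)
    · exact absurd h (by decide)
    · exact absurd h (by decide)

lemma detFails (π' : Set ((Unit → Option Bool) × Set (Unit → Ordering)))
    (hdet : DetPolicy π')
    (hsolve : SolvesFrom transX goalX (PolCompat Set.univ featX π') 0) : False := by
  -- there is a compatible transition from 0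
  have h0 : ∃ t, transX 0 t ∧ PolCompat Set.univ featX π' 0 t := by
    by_contra h
    rcases hsolve.1 0 (fun _ => 0) rfl (by omega) h with ⟨i, hi, hg⟩
    exact absurd hg (by unfold goalX; decide)
  -- hence both (0,1) and (0,2) are compatible (same source, same deltas)
  have key : ∀ t t' : Fin 5, featX () t = featX () t' →
      PolCompat Set.univ featX π' 0 t → PolCompat Set.univ featX π' 0 t' := by
    rintro t t' hft ⟨r, hr, hc, E, hE, hsat⟩
    refine ⟨r, hr, hc, E, hE, fun f _ => ?_⟩
    cases f
    have := hsat () trivial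
    unfold deltaF at this ⊢
    rw [← hft]; exact this
  have h01 : PolCompat Set.univ featX π' 0 1 := by
    rcases h0 with ⟨t, ht, hc⟩
    rcases ht with ⟨_, ht | ht⟩ | ⟨h, _⟩ | ⟨h, _⟩
    · rwa [ht] at hc
    · rw [ht] at hc; exact key 2 1 rfl hc
    · exact absurd h (by decide)
    · exact absurd h (by decide)
  have h02 : PolCompat Set.univ featX π' 0 2 := key 1 2 rfl h01
  -- trajectory 0 → 1 forces compat (1,3)
  have h13 : PolCompat Set.univ featX π' 1 3 := by
    by_contra hcon
    have hmax : ¬ ∃ t, transX 1 t ∧ PolCompat Set.univ featX π' 1 t := by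
      rintro ⟨t, ht, hc⟩
      rcases ht with ⟨h, _⟩ | ⟨_, ht⟩ | ⟨h, _⟩
      · exact absurd h (by decide)
      · rw [ht] at hc; exact hcon hc
      · exact absurd h (by decide)
    rcases hsolve.1 1 (fun i => if i = 0 then 0 else 1) rfl
      (by intro i hi; interval_cases i; exact ⟨Or.inl ⟨rfl, Or.inl rfl⟩, h01⟩) hmax with ⟨i, hi, hg⟩
    interval_cases i <;> exact absurd hg (by unfold goalX; decide)
  -- trajectory 0 → 2 forces compat (2,4)
  have h24 : PolCompat Set.univ featX π' 2 4 := by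
    by_contra hcon
    have hmax : ¬ ∃ t, transX 2 t ∧ PolCompat Set.univ featX π' 2 t := by
      rintro ⟨t, ht, hc⟩
      rcases ht with ⟨h, _⟩ | ⟨h, _⟩ | ⟨_, ht⟩
      · exact absurd h (by decide)
      · exact absurd h (by decide)
      · rw [ht] at hc; exact hcon hc
    rcases hsolve.1 1 (fun i => if i = 0 then 0 else 2) rfl
      (by intro i hi; interval_cases i; exact ⟨Or.inl ⟨rfl, Or.inr rfl⟩, h02⟩) hmax with ⟨i, hi, hg⟩
    interval_cases i <;> exact absurd hg (by unfold goalX; decide)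
  -- extract the deterministic rules
  rcases h13 with ⟨r, hr, hc, E, hE, hsat⟩
  rcases h24 with ⟨r', hr', hc', E', hE', hsat'⟩
  have hEgt : E () = Ordering.gt := by
    have := hsat () trivial; rw [← this]; decide
  have hElt : E' () = Ordering.lt := by
    have := hsat' () trivial; rw [← this]; decide
  have hrr : r = r' := by
    by_contra hne
    refine hdet.2 r hr r' hr' hne (fun _ => true) ⟨?_, ?_⟩
    · intro f b h; have := hc f b h; cases f; rw [← this]; decide
    · intro f b h; have := hc' f b h; cases f; rw [← this]; decide
  subst hrr
  rcases hdet.1 r hr with ⟨E0, hE0⟩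
  rw [hE0] at hE hE'
  rw [Set.mem_singleton_iff] at hE hE'
  rw [hE] at hEgt; rw [hE'] at hElt
  rw [hEgt] at hElt; exact absurd hElt (by decide)


/-- every deterministic policy can be simulated by a (general,
non-deterministic) policy; but not conversely: there is a finite state space, a
feature set Φ, and a non-deterministic policy over Φ solving it, while no
deterministic policy over Φ solves it. -/
theorem stmt17 :
    (∀ (S F : Type) (feat : F → S → ℕ) (Φ : Set F)
        (π : Set ((F → Option Bool) × Set (F → Ordering))),
      OverPhi Φ π → DetPolicy π →
      ∃ π', OverPhi Φ π' ∧
        ∀ s s' : S, PolCompat Φ feat π s s' ↔ PolCompat Φ feat π' s s') ∧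
    (∃ (S F : Type) (_ : Fintype S) (trans : S → S → Prop) (goal : S → Prop)
        (s0 : S) (feat : F → S → ℕ) (Φ : Set F)
        (π : Set ((F → Option Bool) × Set (F → Ordering))),
      OverPhi Φ π ∧ SolvesFrom trans goal (PolCompat Φ feat π) s0 ∧
      ∀ π', OverPhi Φ π' → DetPolicy π' →
        ¬ SolvesFrom trans goal (PolCompat Φ feat π') s0) := by
  constructor
  · intro S F feat Φ π hover _
    exact ⟨π, hover, fun _ _ => Iff.rfl⟩
  · refine ⟨Fin 5, Unit, inferInstance, transX, goalX, 0, featX, Set.univ, piX,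
      fun r _ f _ => trivial, solvesX, fun π' _ hdet hs => detFails π' hdet hs⟩
end

section
/- If a generalized policy π solves every problem P_i[s] obtained from a finite sample instance P_i by resetting the initial state to any non-dead-end reachable state s, then the subgraph of the state space of P_i consisting of π-compatible transitions between non-dead-end, non-goal source states is acyclic and every non-dead-end non-goal state in it has a path to a goal. -/
/-- A finite indexed path yields a `ReflTransGen`. -/
lemma path_rtg {S : Type} (E : S → S → Prop) (p : ℕ → S) :
    ∀ m : ℕ, (∀ i, i < m → E (p i) (p (i+1))) →
      Relation.ReflTransGen E (p 0) (p m) := by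
  intro m
  induction m with
  | zero => intro _; exact Relation.ReflTransGen.refl
  | succ n ih =>
    intro h
    exact Relation.ReflTransGen.tail (ih (fun i hi => h i (by omega)))
      (h n (by omega))

/-- From a `ReflTransGen`, extract a finite indexed path. -/
lemma rtg_path {S : Type} (E : S → S → Prop) {a b : S}
    (h : Relation.ReflTransGen E a b) :
    ∃ (n : ℕ) (p : ℕ → S), p 0 = a ∧ p n = b ∧ ∀ i, i < n → E (p i) (p (i+1)) := by
  induction h with
  | refl => exact ⟨0, fun _ => a, rfl, rfl, fun i hi => by omega⟩
  | @tail b c _ hbc ih =>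
    obtain ⟨n, p, h0, hn, hs⟩ := ih
    refine ⟨n + 1, fun i => if i < n + 1 then p i else c, by simp [h0], by simp, ?_⟩
    intro i hi
    by_cases hin : i < n
    · simp only [if_pos (by omega : i < n+1), if_pos (by omega : i+1 < n+1)]
      exact hs i hin
    · have hieq : i = n := by omega
      simp only [hieq, if_pos (by omega : n < n+1), if_neg (by omega : ¬ n+1 < n+1), hn]
      exact hbc

/-- if π solves every P_i[s] for non-dead-end s, then the subgraph
of π-compatible transitions with non-dead-end, non-goal sources is acyclic and
every non-dead-end, non-goal state has a path to a goal within it. -/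
theorem stmt19 {S : Type} [Fintype S]
    (trans : S → S → Prop) (goal : S → Prop) (π : S → S → Prop)
    (dead : S → Prop)
    (hdead : ∀ s, dead s ↔ ¬ ∃ g, goal g ∧ Relation.ReflTransGen trans s g)
    (hsolves : ∀ s, ¬ dead s → SolvesFrom trans goal π s) :
    (∀ s, ¬ Relation.TransGen
      (fun a b => trans a b ∧ π a b ∧ ¬ goal a ∧ ¬ dead a) s s) ∧
    (∀ s, ¬ goal s → ¬ dead s → ∃ g, goal g ∧
      Relation.ReflTransGen
        (fun a b => trans a b ∧ π a b ∧ ¬ goal a ∧ ¬ dead a) s g) := by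
  classical
  set E : S → S → Prop := fun a b => trans a b ∧ π a b ∧ ¬ goal a ∧ ¬ dead a with hE
  constructor
  · -- acyclicity
    intro s hcyc
    obtain ⟨c, hsc, hcs⟩ := (Relation.TransGen.head'_iff).mp hcyc
    have hnds : ¬ dead s := hsc.2.2.2
    obtain ⟨n, p, hp0, hpn, hps⟩ := rtg_path E hcs
    -- build a cycle of length n+1 starting and ending at s
    set q : ℕ → S := fun i => if i = 0 then s else p (i - 1) with hq
    have hq0 : q 0 = s := rfl
    have hqN : q (n + 1) = s := by simp [hq, hpn]
    have hqs : ∀ i, i < n + 1 → E (q i) (q (i+1)) := by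
      intro i hi
      rcases Nat.eq_zero_or_pos i with h0 | hpos
      · subst h0
        simpa [hq, hp0] using hsc
      · have h1 : q i = p (i - 1) := by simp [hq, Nat.pos_iff_ne_zero.mp hpos]
        have h2 : q (i + 1) = p i := by simp [hq]
        rw [h1, h2]
        have := hps (i - 1) (by omega)
        have heq : i - 1 + 1 = i := by omega
        rwa [heq] at this
    have key : ∀ i : ℕ, (i+1) % (n+1) = (i % (n+1) + 1) % (n+1) := by
      intro i
      conv_lhs => rw [← Nat.div_add_mod i (n+1)]
      rw [Nat.add_assoc, Nat.mul_add_mod]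
    -- infinite path by cycling
    have hpos : 0 < n + 1 := Nat.succ_pos n
    set r : ℕ → S := fun i => q (i % (n + 1)) with hr
    have hr0 : r 0 = s := by simp [hr, hq0]
    have hrstep : ∀ i, trans (r i) (r (i+1)) ∧ π (r i) (r (i+1)) := by
      intro i
      have hj : i % (n+1) < n + 1 := Nat.mod_lt _ hpos
      have hedge := hqs (i % (n+1)) hj
      have hsuc : r (i + 1) = q (i % (n+1) + 1) := by
        by_cases hc : i % (n+1) + 1 < n + 1
        · have h2 : (i + 1) % (n+1) = i % (n+1) + 1 := by
            rw [key i, Nat.mod_eq_of_lt hc]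
          simp only [hr]
          rw [h2]
        · have heq : i % (n+1) + 1 = n + 1 := by omega
          have h2 : (i + 1) % (n+1) = 0 := by
            rw [key i, heq, Nat.mod_self]
          simp only [hr]
          rw [h2, hq0, heq, hqN]
      rw [hsuc]
      exact ⟨hedge.1, hedge.2.1⟩
    exact (hsolves s hnds).2 ⟨r, hr0, hrstep⟩
  · -- every non-goal non-dead state reaches a goal in the subgraph
    intro s hgs hds
    obtain ⟨hfin, hinf⟩ := hsolves s hds
    -- build a greedy compatible trajectory from s
    set p : ℕ → S := fun n =>
      Nat.rec s (fun _ prev =>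
        if h : ∃ t, trans prev t ∧ π prev t then h.choose else prev) n with hp
    have hp0 : p 0 = s := rfl
    have hpsucc : ∀ n, p (n+1) =
        if h : ∃ t, trans (p n) t ∧ π (p n) t then h.choose else p n := fun n => rfl
    -- the trajectory must get stuck
    have hstuck : ∃ n, ¬ ∃ t, trans (p n) t ∧ π (p n) t := by
      by_contra hall
      push_neg at hall
      refine hinf ⟨p, hp0, fun i => ?_⟩
      have h := hall i
      have : p (i+1) = h.choose := by rw [hpsucc i, dif_pos h]
      rw [this]
      exact h.choose_spec
    set n := Nat.find hstuck with hn
    have hnstuck : ¬ ∃ t, trans (p n) t ∧ π (p n) t := Nat.find_spec hstuck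
    have hsteps : ∀ i, i < n → trans (p i) (p (i+1)) ∧ π (p i) (p (i+1)) := by
      intro i hi
      have h : ∃ t, trans (p i) t ∧ π (p i) t := by
        have := Nat.find_min hstuck hi
        push_neg at this
        exact this
      have : p (i+1) = h.choose := by rw [hpsucc i, dif_pos h]
      rw [this]
      exact h.choose_spec
    obtain ⟨k, hkn, hkg⟩ := hfin n p hp0 hsteps hnstuck
    have hgex : ∃ m, goal (p m) := ⟨k, hkg⟩
    set m := Nat.find hgex with hm
    have hmg : goal (p m) := Nat.find_spec hgex
    have hmn : m ≤ n := le_trans (Nat.find_min' hgex hkg) hkn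
    have hEsteps : ∀ j, j < m → E (p j) (p (j+1)) := by
      intro j hj
      have hstep := hsteps j (lt_of_lt_of_le hj hmn)
      refine ⟨hstep.1, hstep.2, Nat.find_min hgex hj, ?_⟩
      -- p j is not dead: goal p m is reachable from p j
      rw [hdead, not_not]
      have hreach : Relation.ReflTransGen trans (p j) (p m) := by
        have := path_rtg trans (fun i => p (j + i)) (m - j)
          (fun i hi => by
            have h := hsteps (j + i) (by omega)
            have heq : j + i + 1 = j + (i + 1) := by omega
            rw [heq] at h
            exact h.1)
        simpa [Nat.add_sub_cancel' (le_of_lt hj)] using this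
      exact ⟨p m, hmg, hreach⟩
    exact ⟨p m, hmg, by rw [← hp0]; exact path_rtg E p m hEsteps⟩
end
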